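/- Let G be a connected signed graph containing an odd-length closed walk consisting entirely of signed edges (equivalently, G is not bipartite). Then for any two vertices i, j connected by a walk {i = i_0, i_1, ..., i_m = j} of odd length, there exist integer weights b_ℓ ∈ {−1, +1} such that Σ_{ℓ=1}^m b_ℓ ρ(i_{ℓ−1} i_ℓ) = e_i + e_j. -/

import Mathlib

/-! Weight the `ℓ`-th edge of the walk by `(-1)^ℓ` times its sign. Since the sign squares to `1`,
that edge then contributes `(-1)^ℓ (e_{i_ℓ} + e_{i_{ℓ+1}})`, and the sum telescopes to
`e_i + (-1)^(m+1) e_j`, which is `e_i + e_j` because `m` is odd. -/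

open scoped BigOperators

namespace EdgeRing

/-- A signed edge on vertex set `Fin n`: endpoints `e.1`, `e.2.1` and sign `e.2.2`. -/
abbrev SEdge (n : ℕ) := Fin n × Fin n × ℤ

/-- A signed graph on `n` vertices: a set of signed edges (loops allowed, `e.1 = e.2.1`). -/
structure SGraph (n : ℕ) where
  E : Set (SEdge n)
  sgn_unit : ∀ e ∈ E, e.2.2 = 1 ∨ e.2.2 = -1

variable {n : ℕ}

/-- `ρ(±ij) = ±(e_i + e_j)` (a loop at `i` gives `±2 e_i`), integer version. -/
def rhoZ (e : SEdge n) : Fin n → ℤ :=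
  fun v => e.2.2 * ((if e.1 = v then 1 else 0) + (if e.2.1 = v then 1 else 0))

/-- real version of `rhoZ`. -/
def rhoR (e : SEdge n) : Fin n → ℝ := fun v => (rhoZ e v : ℝ)

def toR (a : Fin n → ℤ) : Fin n → ℝ := fun v => (a v : ℝ)

def SGraph.rhoZSet (G : SGraph n) : Set (Fin n → ℤ) := {x | ∃ e ∈ G.E, x = rhoZ e}

def SGraph.rhoRSet (G : SGraph n) : Set (Fin n → ℝ) := {x | ∃ e ∈ G.E, x = rhoR e}

/-- `ℤρ(E(G))`: the subgroup of `ℤ^n` generated by the edge vectors. -/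
def SGraph.lattice (G : SGraph n) : AddSubgroup (Fin n → ℤ) :=
  AddSubgroup.closure G.rhoZSet

/-- `ℤ₊ρ(E(G))`: the affine semigroup generated by the edge vectors. -/
def SGraph.sgp (G : SGraph n) : AddSubmonoid (Fin n → ℤ) :=
  AddSubmonoid.closure G.rhoZSet

/-- adjacency via an edge of `G` (symmetric by definition). -/
def SGraph.adj (G : SGraph n) (i j : Fin n) : Prop :=
  ∃ e ∈ G.E, (e.1 = i ∧ e.2.1 = j) ∨ (e.1 = j ∧ e.2.1 = i)

/-- `G` is connected: any two vertices are joined by a walk. -/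
def SGraph.Connected (G : SGraph n) : Prop :=
  ∀ i j : Fin n, Relation.ReflTransGen G.adj i j

/-- the vertex set of the connected component of `v`. -/
def SGraph.compSet (G : SGraph n) (v : Fin n) : Set (Fin n) :=
  {w | Relation.ReflTransGen G.adj v w}

/-- `C` is (the vertex set of) a component of `G`. -/
def SGraph.IsComp (G : SGraph n) (C : Set (Fin n)) : Prop :=
  ∃ v, C = G.compSet v

/-- the edge `e` is incident to the vertex set `S`. -/
def incident (e : SEdge n) (S : Set (Fin n)) : Prop := e.1 ∈ S ∨ e.2.1 ∈ S

/-- the vertex set `C` is partitioned as `L ∪ R` and every edge of `G` incident to `C`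
has one endpoint in `L` and one in `R`. -/
def SGraph.BipWith (G : SGraph n) (C L R : Set (Fin n)) : Prop :=
  C = L ∪ R ∧ Disjoint L R ∧
    ∀ e ∈ G.E, incident e C → ((e.1 ∈ L ∧ e.2.1 ∈ R) ∨ (e.1 ∈ R ∧ e.2.1 ∈ L))

/-- the vertex set `C` (e.g. a component) is bipartite in `G`. -/
def SGraph.BipOn (G : SGraph n) (C : Set (Fin n)) : Prop := ∃ L R, G.BipWith C L R

/-- `L ∪ R` is a bipartition of (all of) `G`. -/
def SGraph.IsBipartition (G : SGraph n) (L R : Set (Fin n)) : Prop :=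
  G.BipWith Set.univ L R

def SGraph.Bipartite (G : SGraph n) : Prop := ∃ L R, G.IsBipartition L R

/-- `comp G`: the number of connected components of `G`. -/
noncomputable def SGraph.comp (G : SGraph n) : ℕ := Nat.card {C : Set (Fin n) // G.IsComp C}

/-- `bicomp G`: the number of bipartite connected components of `G`. -/
noncomputable def SGraph.bicomp (G : SGraph n) : ℕ :=
  Nat.card {C : Set (Fin n) // G.IsComp C ∧ G.BipOn C}

/-- the dual vector `e_L^* - e_R^*` as an element of `ℝ^n`. -/
noncomputable def dvec (L R : Set (Fin n)) : Fin n → ℝ :=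
  fun v => Set.indicator L (fun _ => (1 : ℝ)) v - Set.indicator R (fun _ => (1 : ℝ)) v

/-- `L, R` witness the facet-subgraph condition for the bipartite component `C` of `H`:
`C = L ∪ R` is a bipartition, and every edge of `G` not in `H` is a positive edge
incident to `L` but not `R`, or a negative edge incident to `R` but not `L`. -/
def FacetWitness (G H : SGraph n) (C L R : Set (Fin n)) : Prop :=
  H.BipWith C L R ∧
    ∀ e ∈ G.E \ H.E,
      (e.2.2 = 1 ∧ incident e L ∧ ¬ incident e R) ∨
      (e.2.2 = -1 ∧ incident e R ∧ ¬ incident e L)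

/-- `H` is a facet subgraph of `G`. -/
def IsFacetSubgraph (G H : SGraph n) : Prop :=
  H.E ⊆ G.E ∧ H.bicomp = G.bicomp + 1 ∧
    ∀ C, H.IsComp C → H.BipOn C → ¬ G.IsComp C → ∃ L R, FacetWitness G H C L R

/-- the cone generated by `S`: all nonnegative real combinations. -/
def coneOf (S : Set (Fin n → ℝ)) : Set (Fin n → ℝ) :=
  {x | ∃ (t : Finset (Fin n → ℝ)) (c : (Fin n → ℝ) → ℝ),
    ↑t ⊆ S ∧ (∀ y, 0 ≤ c y) ∧ x = ∑ y ∈ t, c y • y}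

/-- the dimension of a subset of `ℝ^n`: dimension of its linear span. -/
noncomputable def sdim (S : Set (Fin n → ℝ)) : ℕ := Module.finrank ℝ (Submodule.span ℝ S)

/-- `F` is a face of the cone `C`, cut out by a supporting linear form. -/
def IsFaceOf (C F : Set (Fin n → ℝ)) : Prop :=
  ∃ σ : (Fin n → ℝ) →ₗ[ℝ] ℝ, (∀ x ∈ C, 0 ≤ σ x) ∧ F = C ∩ {x | σ x = 0}

/-- `F` is a facet of the cone `C`: a proper face of dimension `dim C - 1`. -/
def IsFacetOf (C F : Set (Fin n → ℝ)) : Prop :=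
  IsFaceOf C F ∧ F ≠ C ∧ sdim F + 1 = sdim C

/-- the subgraph of `G` consisting of the edges inside the vertex set `C`. -/
def SGraph.restrict (G : SGraph n) (C : Set (Fin n)) : SGraph n :=
  ⟨{e ∈ G.E | e.1 ∈ C}, fun e he => G.sgn_unit e he.1⟩

/-- Vitulli's criterion for Serre's `R₁` condition for the edge ring `k[G]`
(taken here as the definition of `R₁`). -/
def SerreR1 (G : SGraph n) : Prop :=
  ∀ F, IsFacetOf (coneOf G.rhoRSet) F →
    ∃ σ : (Fin n → ℝ) →ₗ[ℝ] ℝ,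
      (∀ x ∈ coneOf G.rhoRSet, 0 ≤ σ x) ∧
      F = coneOf G.rhoRSet ∩ {x | σ x = 0} ∧
      (∀ a ∈ G.lattice, ∃ z : ℤ, σ (toR a) = z) ∧
      (∃ a ∈ G.sgp, σ (toR a) = 1) ∧
      ((AddSubgroup.closure {a : Fin n → ℤ | a ∈ G.sgp ∧ toR a ∈ F} : AddSubgroup (Fin n → ℤ)) :
          Set (Fin n → ℤ)) = {a : Fin n → ℤ | a ∈ G.lattice ∧ σ (toR a) = 0}

/-! ### Mixed signed, directed graphs -/

/-- A mixed signed, directed graph: signed edges `SE` (loops allowed) and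
directed edges `DE` (no directed loops). -/
structure MGraph (n : ℕ) where
  SE : Set (SEdge n)
  DE : Set (Fin n × Fin n)
  sgn_unit : ∀ e ∈ SE, e.2.2 = 1 ∨ e.2.2 = -1
  no_dloop : ∀ e ∈ DE, e.1 ≠ e.2

/-- `ρ((i,j)) = e_j - e_i` for a directed edge. -/
def rhoD (e : Fin n × Fin n) : Fin n → ℤ :=
  fun v => (if e.2 = v then 1 else 0) - (if e.1 = v then 1 else 0)

def MGraph.rhoZSet (G : MGraph n) : Set (Fin n → ℤ) :=
  {x | ∃ e ∈ G.SE, x = rhoZ e} ∪ {x | ∃ e ∈ G.DE, x = rhoD e}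

def MGraph.rhoRSet (G : MGraph n) : Set (Fin n → ℝ) :=
  {x | ∃ a ∈ G.rhoZSet, x = toR a}

/-- `ℤρ(E(G))` for a mixed signed, directed graph. -/
def MGraph.lattice (G : MGraph n) : AddSubgroup (Fin n → ℤ) :=
  AddSubgroup.closure G.rhoZSet

def MGraph.adj (G : MGraph n) (i j : Fin n) : Prop :=
  (∃ e ∈ G.SE, (e.1 = i ∧ e.2.1 = j) ∨ (e.1 = j ∧ e.2.1 = i)) ∨
  (∃ e ∈ G.DE, (e.1 = i ∧ e.2 = j) ∨ (e.1 = j ∧ e.2 = i))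

def MGraph.Connected (G : MGraph n) : Prop :=
  ∀ i j : Fin n, Relation.ReflTransGen G.adj i j

def MGraph.compSet (G : MGraph n) (v : Fin n) : Set (Fin n) :=
  {w | Relation.ReflTransGen G.adj v w}

def MGraph.IsComp (G : MGraph n) (C : Set (Fin n)) : Prop :=
  ∃ v, C = G.compSet v

noncomputable def MGraph.comp (G : MGraph n) : ℕ := Nat.card {C : Set (Fin n) // G.IsComp C}

/-- the directed edge `e` is incident to the vertex set `S`. -/
def dincident (e : Fin n × Fin n) (S : Set (Fin n)) : Prop := e.1 ∈ S ∨ e.2 ∈ S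

/-- Bipartiteness of the augmented signed graph of `G` on the vertex set `C`,
expressed on `G` itself: `C = L ∪ R`, every signed edge incident to `C` crosses
between `L` and `R`, and every directed edge incident to `C` has both endpoints
in the same part (its artificial vertex lies on the other side). -/
def MGraph.BipWith (G : MGraph n) (C L R : Set (Fin n)) : Prop :=
  C = L ∪ R ∧ Disjoint L R ∧
    (∀ e ∈ G.SE, incident e C → ((e.1 ∈ L ∧ e.2.1 ∈ R) ∨ (e.1 ∈ R ∧ e.2.1 ∈ L))) ∧
    (∀ e ∈ G.DE, dincident e C → ((e.1 ∈ L ∧ e.2 ∈ L) ∨ (e.1 ∈ R ∧ e.2 ∈ R)))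

def MGraph.BipOn (G : MGraph n) (C : Set (Fin n)) : Prop := ∃ L R, G.BipWith C L R

def MGraph.IsBipartition (G : MGraph n) (L R : Set (Fin n)) : Prop :=
  G.BipWith Set.univ L R

def MGraph.Bipartite (G : MGraph n) : Prop := ∃ L R, G.IsBipartition L R

/-- number of components of `G` whose augmentation is bipartite. -/
noncomputable def MGraph.bicomp (G : MGraph n) : ℕ :=
  Nat.card {C : Set (Fin n) // G.IsComp C ∧ G.BipOn C}

/-- facet-subgraph witness for mixed signed, directed graphs. -/
def MFacetWitness (G H : MGraph n) (C L R : Set (Fin n)) : Prop :=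
  H.BipWith C L R ∧
    (∀ e ∈ G.SE \ H.SE,
      (e.2.2 = 1 ∧ incident e L ∧ ¬ incident e R) ∨
      (e.2.2 = -1 ∧ incident e R ∧ ¬ incident e L)) ∧
    (∀ e ∈ G.DE \ H.DE, (e.2 ∈ L ∧ e.1 ∉ L) ∨ (e.1 ∈ R ∧ e.2 ∉ R))

/-- `H` is a facet subgraph of the mixed signed, directed graph `G`. -/
def IsMFacetSubgraph (G H : MGraph n) : Prop :=
  H.SE ⊆ G.SE ∧ H.DE ⊆ G.DE ∧ H.bicomp = G.bicomp + 1 ∧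
    ∀ C, H.IsComp C → H.BipOn C → ¬ G.IsComp C → ∃ L R, MFacetWitness G H C L R

theorem sum_neg_one_pow_smul_add_succ {M : Type*} [AddCommGroup M] (m : ℕ)
    (f : Fin (m + 1) → M) :
    ∑ ℓ : Fin m, (-1 : ℤ) ^ (ℓ : ℕ) • (f ℓ.castSucc + f ℓ.succ) =
      f 0 + (-1 : ℤ) ^ (m + 1) • f (Fin.last m) := by
  induction m with
  | zero => simp
  | succ m ih =>
    rw [Fin.sum_univ_castSucc]
    simp only [Fin.val_castSucc, Fin.succ_castSucc]
    rw [ih (fun k => f k.castSucc)]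
    have hsign : (-1 : ℤ) ^ (m + 1) = -(-1) ^ m := by ring
    have hsign' : (-1 : ℤ) ^ (m + 1 + 1) = (-1) ^ m := by ring
    rw [Fin.val_last, Fin.castSucc_zero, Fin.succ_last, hsign, hsign', smul_add, neg_smul]
    abel

theorem rhoZ_eq_smul (e : SEdge n) :
    rhoZ e = e.2.2 • (Pi.single e.1 1 + Pi.single e.2.1 1 : Fin n → ℤ) := by
  funext v
  simp [rhoZ, Pi.single_apply, eq_comm]

theorem SGraph.sign_smul_rhoZ {G : SGraph n} {e : SEdge n} (he : e ∈ G.E) :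
    e.2.2 • rhoZ e = (Pi.single e.1 1 + Pi.single e.2.1 1 : Fin n → ℤ) := by
  rw [rhoZ_eq_smul, smul_smul]
  rcases G.sgn_unit e he with h | h <;> simp [h]

theorem SGraph.sum_alternating_sign_smul_rhoZ {G : SGraph n} {m : ℕ}
    (w : Fin (m + 1) → Fin n) (es : Fin m → SEdge n) (hes : ∀ ℓ, es ℓ ∈ G.E)
    (hstep : ∀ ℓ : Fin m,
      ((es ℓ).1 = w ℓ.castSucc ∧ (es ℓ).2.1 = w ℓ.succ) ∨
      ((es ℓ).1 = w ℓ.succ ∧ (es ℓ).2.1 = w ℓ.castSucc)) :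
    ∑ ℓ : Fin m, ((-1 : ℤ) ^ (ℓ : ℕ) * (es ℓ).2.2) • rhoZ (es ℓ) =
      Pi.single (w 0) 1 + (-1 : ℤ) ^ (m + 1) • (Pi.single (w (Fin.last m)) 1 : Fin n → ℤ) := by
  have hterm : ∀ ℓ : Fin m, ((-1 : ℤ) ^ (ℓ : ℕ) * (es ℓ).2.2) • rhoZ (es ℓ) =
      (-1 : ℤ) ^ (ℓ : ℕ) • (Pi.single (w ℓ.castSucc) 1 + Pi.single (w ℓ.succ) 1) := by
    intro ℓ
    rw [mul_smul, sign_smul_rhoZ (hes ℓ)]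
    rcases hstep ℓ with ⟨h1, h2⟩ | ⟨h1, h2⟩
    · rw [h1, h2]
    · rw [h1, h2, add_comm]
  simp only [hterm]
  exact sum_neg_one_pow_smul_add_succ m (fun k => Pi.single (w k) 1)

theorem stmt6_general {n : ℕ} (G : SGraph n)
    (i j : Fin n) (m : ℕ) (hm : Odd m)
    (w : Fin (m + 1) → Fin n) (es : Fin m → SEdge n)
    (hes : ∀ ℓ, es ℓ ∈ G.E)
    (hw0 : w 0 = i) (hwm : w (Fin.last m) = j)
    (hstep : ∀ ℓ : Fin m,
      ((es ℓ).1 = w ℓ.castSucc ∧ (es ℓ).2.1 = w ℓ.succ) ∨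
      ((es ℓ).1 = w ℓ.succ ∧ (es ℓ).2.1 = w ℓ.castSucc)) :
    ∃ b : Fin m → ℤ, (∀ ℓ, b ℓ = 1 ∨ b ℓ = -1) ∧
      ∑ ℓ, b ℓ • rhoZ (es ℓ) = (Pi.single i 1 + Pi.single j 1 : Fin n → ℤ) := by
  refine ⟨fun ℓ => (-1 : ℤ) ^ (ℓ : ℕ) * (es ℓ).2.2, fun ℓ => ?_, ?_⟩
  · exact Int.isUnit_iff.mp <| (isUnit_neg_one.pow _).mul <|
      Int.isUnit_iff.mpr (G.sgn_unit _ (hes ℓ))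
  · rw [G.sum_alternating_sign_smul_rhoZ w es hes hstep, hm.add_one.neg_one_pow, one_smul,
      hw0, hwm]

/-- along any odd-length walk from `i` to `j` in a connected
non-bipartite signed graph, one can choose weights `b_ℓ ∈ {±1}` so that the weighted
sum of the edge vectors is `e_i + e_j`. -/
theorem stmt6 {n : ℕ} (G : SGraph n) (hconn : G.Connected) (hnb : ¬ G.Bipartite)
    (i j : Fin n) (m : ℕ) (hm : Odd m)
    (w : Fin (m + 1) → Fin n) (es : Fin m → SEdge n)
    (hes : ∀ ℓ, es ℓ ∈ G.E)
    (hw0 : w 0 = i) (hwm : w (Fin.last m) = j)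
    (hstep : ∀ ℓ : Fin m,
      ((es ℓ).1 = w ℓ.castSucc ∧ (es ℓ).2.1 = w ℓ.succ) ∨
      ((es ℓ).1 = w ℓ.succ ∧ (es ℓ).2.1 = w ℓ.castSucc)) :
    ∃ b : Fin m → ℤ, (∀ ℓ, b ℓ = 1 ∨ b ℓ = -1) ∧
      ∑ ℓ, b ℓ • rhoZ (es ℓ) = (Pi.single i 1 + Pi.single j 1 : Fin n → ℤ) :=
  stmt6_general G i j m hm w es hes hw0 hwm hstep

end EdgeRing
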